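/- Let G be a finite commutative group, let g₁, …, g_d ∈ G generate G, and let u₁, …, u_k ∈ G be arbitrary. Let T ≥ 1 be a real number and suppose the relation lattice L(g₁,…,g_d) ⊆ ℤ^d has a ℤ-basis b₁, …, b_d with ‖bᵢ‖ ≤ T for all i. Then the relation lattice L(g₁,…,g_d,u₁,…,u_k) ⊆ ℤ^{d+k} has a ℤ-basis consisting of d + k vectors, each of Euclidean norm at most √(d+1) · T. -/

import Mathlib

/-- The relation lattice `L(g₁,…,gₜ) = {(z₁,…,zₜ) ∈ ℤᵗ : ∏ᵢ gᵢ^{zᵢ} = 1}`,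
as an additive subgroup of `ℤᵗ`. -/
def relLattice {G : Type*} [CommGroup G] {t : ℕ} (g : Fin t → G) :
    AddSubgroup (Fin t → ℤ) where
  carrier := {z | ∏ i, g i ^ z i = 1}
  zero_mem' := by simp
  add_mem' := by
    intro a b ha hb
    simp only [Set.mem_setOf_eq, Pi.add_apply] at *
    simp [zpow_add, Finset.prod_mul_distrib, ha, hb]
  neg_mem' := by
    intro a ha
    simp only [Set.mem_setOf_eq, Pi.neg_apply] at *
    simp [zpow_neg, Finset.prod_inv_distrib, ha]


/-- The Euclidean norm of an integer vector. -/
noncomputable def intNorm {d : ℕ} (z : Fin d → ℤ) : ℝ :=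
  Real.sqrt (∑ i, ((z i : ℝ)) ^ 2)

/-!
Write each `uⱼ` as `∏ gᵢ ^ aⱼᵢ`. Since `uⱼ` has finite order, some multiple of `aⱼ` lies in
`L(g)`, so `aⱼ` lies in the real span of the basis `b`, and Babai's nearest-plane rounding
replaces `aⱼ` by a vector `Aⱼ ≡ aⱼ (mod L(g))` with `‖Aⱼ‖² ≤ (∑ ‖bᵢ‖²) / 4 ≤ d T² / 4`.
As `(x, y) ∈ L(g, u)` iff `x + ∑ yⱼ Aⱼ ∈ L(g)`, the vectors `(bᵢ, 0)` and `(-Aⱼ, eⱼ)` form a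
basis of `L(g, u)`, and their norms are at most `T` and `√(d T² / 4 + 1) ≤ √(d + 1) T`.
-/

open Finset

section NearestPlane

variable {E : Type*} [NormedAddCommGroup E] [InnerProductSpace ℝ E]

theorem Submodule.exists_smul_eq_add_round_smul_add (V : Submodule ℝ E)
    [V.HasOrthogonalProjection] (c : ℝ) (v : E) :
    ∃ p ∈ V, ∃ e ∈ Vᗮ, c • v = p + (round c : ℝ) • v + e ∧ ‖e‖ ^ 2 ≤ ‖v‖ ^ 2 / 4 := by
  set θ := c - round c
  refine ⟨θ • V.starProjection v, V.smul_mem θ (V.starProjection_apply_mem v),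
    θ • (v - V.starProjection v), Vᗮ.smul_mem θ (V.sub_starProjection_mem_orthogonal v), ?_, ?_⟩
  · simp only [θ, smul_sub, sub_smul]
    abel
  · have hθ : |θ| ≤ 1 / 2 := abs_sub_round c
    have hv : ‖v - V.starProjection v‖ ≤ ‖v‖ := by
      rw [← Submodule.starProjection_orthogonal_val]
      exact Vᗮ.norm_starProjection_apply_le v
    rw [norm_smul, Real.norm_eq_abs, mul_pow]
    have := pow_le_pow_left₀ (norm_nonneg _) hv 2
    have := pow_le_pow_left₀ (abs_nonneg θ) hθ 2
    nlinarith [sq_nonneg ‖v‖, sq_nonneg ‖v - V.starProjection v‖]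

/-- Babai's nearest plane algorithm: round the coefficient of the last vector, then recurse on the
span of the others; the rounding errors are mutually orthogonal. -/
theorem exists_norm_sub_sum_intCast_smul_sq_le :
    ∀ (m : ℕ) (b : Fin m → E) (a : E), a ∈ Submodule.span ℝ (Set.range b) →
      ∃ z : Fin m → ℤ, ‖a - ∑ i, (z i : ℝ) • b i‖ ^ 2 ≤ (∑ i, ‖b i‖ ^ 2) / 4
  | 0, b, a, ha => ⟨0, by simp_all [Set.range_eq_empty]⟩
  | m + 1, b, a, ha => by
    obtain ⟨c, rfl⟩ := (Submodule.mem_span_range_iff_exists_fun ℝ).mp ha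
    set V := Submodule.span ℝ (Set.range (b ∘ Fin.castSucc))
    have : FiniteDimensional ℝ V := FiniteDimensional.span_of_finite ℝ (Set.finite_range _)
    have hV : ∀ x : Fin m → ℝ, ∑ i, x i • b i.castSucc ∈ V := fun x ↦
      Submodule.sum_mem _ fun i _ ↦ V.smul_mem _ (Submodule.subset_span ⟨i, rfl⟩)
    obtain ⟨p, hp, e, he, hc, he_le⟩ :=
      V.exists_smul_eq_add_round_smul_add (c (Fin.last m)) (b (Fin.last m))
    obtain ⟨z, hz⟩ := exists_norm_sub_sum_intCast_smul_sq_le m (b ∘ Fin.castSucc)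
      (∑ i : Fin m, c i.castSucc • b i.castSucc + p) (V.add_mem (hV _) hp)
    refine ⟨Fin.snoc z (round (c (Fin.last m))), ?_⟩
    set r := ∑ i : Fin m, c i.castSucc • b i.castSucc + p -
      ∑ i, (z i : ℝ) • (b ∘ Fin.castSucc) i
    have hr : r ∈ V := V.sub_mem (V.add_mem (hV _) hp) (hV _)
    have hsplit : ∑ i, c i • b i -
        ∑ i, ((Fin.snoc z (round (c (Fin.last m))) : Fin (m + 1) → ℤ) i : ℝ) • b i = r + e := by
      simp only [Fin.sum_univ_castSucc, Fin.snoc_castSucc, Fin.snoc_last, hc, r,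
        Function.comp_apply]
      abel
    rw [hsplit, norm_add_sq_real, Submodule.inner_right_of_mem_orthogonal hr he,
      Fin.sum_univ_castSucc]
    simp only [Function.comp_apply] at hz
    linarith

end NearestPlane

section LatticeBasis

variable {M : Type*} [AddCommGroup M]

def IsLatticeBasis {ι : Type*} [Fintype ι] (L : AddSubgroup M) (b : ι → M) : Prop :=
  (∀ i, b i ∈ L) ∧ ∀ z ∈ L, ∃! c : ι → ℤ, z = ∑ i, c i • b i

def extendBasis {m d k : ℕ} (b : Fin m → Fin d → ℤ) (A : Fin k → Fin d → ℤ) :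
    Fin (m + k) → Fin (d + k) → ℤ :=
  Fin.append (fun i ↦ Fin.append (b i) 0) (fun j ↦ Fin.append (-A j) (Pi.single j 1))

theorem Fin.append_inj_iff {α : Type*} {m n : ℕ} {x x' : Fin m → α} {y y' : Fin n → α} :
    Fin.append x y = Fin.append x' y' ↔ x = x' ∧ y = y' :=
  show Fin.appendEquiv m n (x, y) = Fin.appendEquiv m n (x', y') ↔ _ from
    (Fin.appendEquiv m n).injective.eq_iff.trans Prod.ext_iff

theorem sum_smul_extendBasis {m d k : ℕ} (b : Fin m → Fin d → ℤ) (A : Fin k → Fin d → ℤ)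
    (c₁ : Fin m → ℤ) (c₂ : Fin k → ℤ) :
    ∑ t, Fin.append c₁ c₂ t • extendBasis b A t
      = Fin.append (∑ i, c₁ i • b i - ∑ j, c₂ j • A j) c₂ := by
  funext s
  refine Fin.addCases (fun s ↦ ?_) (fun s ↦ ?_) s <;>
    simp [extendBasis, Fin.sum_univ_add, Finset.sum_apply, Pi.single_apply, sub_eq_add_neg]

/-- The change of coordinates `(x, y) ↦ (x + ∑ yⱼ Aⱼ, y)` is unimodular and carries `L'` onto
`L × ℤᵏ`, whose basis `(bᵢ, 0), (0, eⱼ)` it pulls back to `extendBasis b A`. -/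
theorem IsLatticeBasis.extendBasis {m d k : ℕ} {L : AddSubgroup (Fin d → ℤ)}
    {L' : AddSubgroup (Fin (d + k) → ℤ)} {b : Fin m → Fin d → ℤ} {A : Fin k → Fin d → ℤ}
    (hb : IsLatticeBasis L b)
    (hL' : ∀ x y, Fin.append x y ∈ L' ↔ x + ∑ j, y j • A j ∈ L) :
    IsLatticeBasis L' (extendBasis b A) := by
  refine ⟨fun t ↦ ?_, fun v hv ↦ ?_⟩
  · refine Fin.addCases (fun i ↦ ?_) (fun j ↦ ?_) t
    · simpa [_root_.extendBasis, hL'] using hb.1 i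
    · simp [_root_.extendBasis, hL', Pi.single_apply]
  · rw [← Fin.append_castAdd_natAdd (f := v)] at hv ⊢
    set x := fun i ↦ v (Fin.castAdd k i)
    set y := fun j ↦ v (Fin.natAdd d j)
    obtain ⟨c, hc, hc_unique⟩ := hb.2 _ ((hL' x y).mp hv)
    refine (Fin.appendEquiv m k).existsUnique_congr_right.mp ⟨(c, y), ?_, ?_⟩
    · change _ = ∑ t, Fin.append c y t • _
      rw [sum_smul_extendBasis, ← hc, add_sub_cancel_right]
    · rintro ⟨c₁, c₂⟩ h
      simp only [Fin.appendEquiv_apply, sum_smul_extendBasis, Fin.append_inj_iff] at h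
      obtain ⟨h₁, rfl⟩ := h
      rw [hc_unique c₁ (by rw [h₁, sub_add_cancel])]

end LatticeBasis

section RelationLattice

variable {G : Type*} [CommGroup G]

def prodZPowHom {t : ℕ} (g : Fin t → G) : (Fin t → ℤ) →+ Additive G where
  toFun z := Additive.ofMul (∏ i, g i ^ z i)
  map_zero' := by simp
  map_add' x y := by simp [zpow_add, prod_mul_distrib]

theorem prodZPowHom_apply {t : ℕ} (g : Fin t → G) (z : Fin t → ℤ) :
    prodZPowHom g z = Additive.ofMul (∏ i, g i ^ z i) := rfl

theorem relLattice_eq_ker {t : ℕ} (g : Fin t → G) : relLattice g = (prodZPowHom g).ker := by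
  ext z
  rw [AddMonoidHom.mem_ker, prodZPowHom_apply, ofMul_eq_zero]
  rfl

theorem prodZPowHom_append {d k : ℕ} (g : Fin d → G) (u : Fin k → G) (x : Fin d → ℤ)
    (y : Fin k → ℤ) :
    prodZPowHom (Fin.append g u) (Fin.append x y) = prodZPowHom g x + prodZPowHom u y := by
  simp [prodZPowHom_apply, Fin.prod_univ_add]

theorem append_mem_relLattice_append_iff {d k : ℕ} {g : Fin d → G} {u : Fin k → G}
    {A : Fin k → Fin d → ℤ} (hA : ∀ j, ∏ i, g i ^ A j i = u j) (x : Fin d → ℤ) (y : Fin k → ℤ) :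
    Fin.append x y ∈ relLattice (Fin.append g u) ↔ x + ∑ j, y j • A j ∈ relLattice g := by
  have hu : prodZPowHom u y = ∑ j, y j • prodZPowHom g (A j) := by
    simp [prodZPowHom_apply, hA, ← ofMul_zpow, ← ofMul_prod]
  simp only [relLattice_eq_ker, AddMonoidHom.mem_ker, prodZPowHom_append, map_add, map_sum,
    map_zsmul, hu]

theorem exists_nsmul_mem_relLattice {t : ℕ} (g : Fin t → G) (a : Fin t → ℤ)
    (ha : IsOfFinOrder (∏ i, g i ^ a i)) : ∃ n : ℕ, 0 < n ∧ n • a ∈ relLattice g := by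
  refine ⟨orderOf (∏ i, g i ^ a i), ha.orderOf_pos, ?_⟩
  rw [relLattice_eq_ker, AddMonoidHom.mem_ker, map_nsmul, prodZPowHom_apply, ← ofMul_pow,
    pow_orderOf_eq_one, ofMul_one]

end RelationLattice

def intToEuclidean (d : ℕ) : (Fin d → ℤ) →+ EuclideanSpace ℝ (Fin d) :=
  (WithLp.addEquiv 2 (Fin d → ℝ)).symm.toAddMonoidHom.comp ((Int.castAddHom ℝ).compLeft (Fin d))

theorem intNorm_eq_norm_intToEuclidean {d : ℕ} (z : Fin d → ℤ) :
    intNorm z = ‖intToEuclidean d z‖ := by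
  simp [intNorm, EuclideanSpace.norm_eq, intToEuclidean]

theorem intNorm_nonneg {d : ℕ} (z : Fin d → ℤ) : 0 ≤ intNorm z := Real.sqrt_nonneg _

theorem intNorm_sq {d : ℕ} (z : Fin d → ℤ) : intNorm z ^ 2 = ∑ i, (z i : ℝ) ^ 2 :=
  Real.sq_sqrt (by positivity)

theorem intNorm_append_sq {m n : ℕ} (x : Fin m → ℤ) (y : Fin n → ℤ) :
    intNorm (Fin.append x y) ^ 2 = intNorm x ^ 2 + intNorm y ^ 2 := by
  simp [intNorm_sq, Fin.sum_univ_add]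

theorem intNorm_zero {n : ℕ} : intNorm (0 : Fin n → ℤ) = 0 := by
  simp [intNorm]

theorem intNorm_neg {n : ℕ} (z : Fin n → ℤ) : intNorm (-z) = intNorm z := by
  simp [intNorm]

theorem intNorm_single_one {n : ℕ} (j : Fin n) : intNorm (Pi.single j 1 : Fin n → ℤ) = 1 := by
  simp [intNorm, Pi.single_apply]

theorem intNorm_extendBasis_le {m d k : ℕ} {b : Fin m → Fin d → ℤ} {A : Fin k → Fin d → ℤ}
    {R : ℝ} (hR : 0 ≤ R) (hb : ∀ i, intNorm (b i) ≤ R) (hA : ∀ j, intNorm (A j) ^ 2 + 1 ≤ R ^ 2)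
    (t : Fin (m + k)) : intNorm (extendBasis b A t) ≤ R := by
  rw [← pow_le_pow_iff_left₀ (intNorm_nonneg _) hR two_ne_zero]
  refine Fin.addCases (fun i ↦ ?_) (fun j ↦ ?_) t
  · rw [extendBasis, Fin.append_left, intNorm_append_sq, intNorm_zero, zero_pow two_ne_zero,
      add_zero]
    exact pow_le_pow_left₀ (intNorm_nonneg _) (hb i) 2
  · rw [extendBasis, Fin.append_right, intNorm_append_sq, intNorm_neg, intNorm_single_one,
      one_pow]
    exact hA j

theorem IsLatticeBasis.intToEuclidean_mem_span {m d : ℕ} {L : AddSubgroup (Fin d → ℤ)}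
    {b : Fin m → Fin d → ℤ} (hb : IsLatticeBasis L b) {a : Fin d → ℤ} {n : ℕ} (hn : 0 < n)
    (ha : n • a ∈ L) :
    intToEuclidean d a ∈ Submodule.span ℝ (Set.range (intToEuclidean d ∘ b)) := by
  obtain ⟨c, hc, -⟩ := hb.2 _ ha
  have hna : (n : ℝ) • intToEuclidean d a = ∑ i, (c i : ℝ) • intToEuclidean d (b i) := by
    rw [Nat.cast_smul_eq_nsmul, ← map_nsmul, hc, map_sum]
    simp only [map_zsmul, Int.cast_smul_eq_zsmul]
  rw [← Submodule.smul_mem_iff _ (Nat.cast_ne_zero.mpr hn.ne' : (n : ℝ) ≠ 0), hna]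
  exact Submodule.sum_mem _ fun i _ ↦ Submodule.smul_mem _ _ (Submodule.subset_span ⟨i, rfl⟩)

theorem exists_prod_zpow_eq_intNorm_sq_le {G : Type*} [CommGroup G] {m d : ℕ} {g : Fin d → G}
    {b : Fin m → Fin d → ℤ} (hb : IsLatticeBasis (relLattice g) b) {x : G}
    (hx : x ∈ Subgroup.closure (Set.range g)) (hx_fin : IsOfFinOrder x) :
    ∃ A : Fin d → ℤ, ∏ i, g i ^ A i = x ∧ intNorm A ^ 2 ≤ (∑ i, intNorm (b i) ^ 2) / 4 := by
  obtain ⟨a, rfl⟩ := Subgroup.mem_closure_range_iff_of_fintype.mp hx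
  obtain ⟨n, hn, hna⟩ := exists_nsmul_mem_relLattice g a hx_fin
  obtain ⟨z, hz⟩ :=
    exists_norm_sub_sum_intCast_smul_sq_le m _ _ (hb.intToEuclidean_mem_span hn hna)
  refine ⟨a - ∑ i, z i • b i, ?_, ?_⟩
  · have hsum : ∑ i, z i • b i ∈ relLattice g := AddSubgroup.sum_mem _ fun i _ ↦
      AddSubgroup.zsmul_mem _ (hb.1 i) _
    rw [relLattice_eq_ker, AddMonoidHom.mem_ker] at hsum
    have h := map_sub (prodZPowHom g) a (∑ i, z i • b i)
    rw [hsum, sub_zero, prodZPowHom_apply, prodZPowHom_apply] at h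
    exact Additive.ofMul.injective h
  · simp only [intNorm_eq_norm_intToEuclidean, map_sub, map_sum, map_zsmul,
      ← Int.cast_smul_eq_zsmul ℝ]
    exact hz

theorem statement7_general {G : Type*} [CommGroup G] [Finite G] (d k : ℕ)
    (g : Fin d → G) (u : Fin k → G) (hgen : Subgroup.closure (Set.range g) = ⊤)
    (T : ℝ) (hT : 1 ≤ T) (b : Fin d → (Fin d → ℤ))
    (hbmem : ∀ i, b i ∈ relLattice g)
    (hbasis : ∀ z ∈ relLattice g, ∃! c : Fin d → ℤ, z = ∑ i, c i • b i)
    (hbnorm : ∀ i, intNorm (b i) ≤ T) :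
    ∃ B : Fin (d + k) → (Fin (d + k) → ℤ),
      (∀ i, B i ∈ relLattice (Fin.append g u)) ∧
      (∀ z ∈ relLattice (Fin.append g u), ∃! c : Fin (d + k) → ℤ, z = ∑ i, c i • B i) ∧
      ∀ i, intNorm (B i) ≤ Real.sqrt (d + 1) * T := by
  have hb : IsLatticeBasis (relLattice g) b := ⟨hbmem, hbasis⟩
  have hsum : ∑ i, intNorm (b i) ^ 2 ≤ d * T ^ 2 := calc
    _ ≤ ∑ _i : Fin d, T ^ 2 :=
      sum_le_sum fun i _ ↦ pow_le_pow_left₀ (intNorm_nonneg _) (hbnorm i) 2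
    _ = d * T ^ 2 := by simp
  choose A hA hA_norm using fun j ↦ exists_prod_zpow_eq_intNorm_sq_le hb
    (hgen ▸ Subgroup.mem_top (u j)) (isOfFinOrder_of_finite (u j))
  obtain ⟨hB_mem, hB_basis⟩ := hb.extendBasis (append_mem_relLattice_append_iff hA)
  refine ⟨extendBasis b A, hB_mem, hB_basis, intNorm_extendBasis_le (by positivity)
    (fun i ↦ (hbnorm i).trans (le_mul_of_one_le_left (by linarith) ?_)) fun j ↦ ?_⟩
  · exact Real.one_le_sqrt.mpr (le_add_of_nonneg_left d.cast_nonneg)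
  · rw [mul_pow, Real.sq_sqrt (by positivity)]
    nlinarith [hA_norm j]

/-- If `g₁,…,g_d` generate the finite commutative group `G`, `u₁,…,u_k ∈ G` are
arbitrary, `T ≥ 1`, and the relation lattice `L(g₁,…,g_d)` has a ℤ-basis of vectors of
norm at most `T`, then the relation lattice `L(g₁,…,g_d,u₁,…,u_k) ⊆ ℤ^{d+k}` has a
ℤ-basis of `d+k` vectors, each of Euclidean norm at most `√(d+1) · T`. -/
theorem statement7 {G : Type*} [CommGroup G] [Finite G] (d k : ℕ) (hd : 0 < d)
    (g : Fin d → G) (u : Fin k → G) (hgen : Subgroup.closure (Set.range g) = ⊤)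
    (T : ℝ) (hT : 1 ≤ T) (b : Fin d → (Fin d → ℤ))
    (hbmem : ∀ i, b i ∈ relLattice g)
    (hbasis : ∀ z ∈ relLattice g, ∃! c : Fin d → ℤ, z = ∑ i, c i • b i)
    (hbnorm : ∀ i, intNorm (b i) ≤ T) :
    ∃ B : Fin (d + k) → (Fin (d + k) → ℤ),
      (∀ i, B i ∈ relLattice (Fin.append g u)) ∧
      (∀ z ∈ relLattice (Fin.append g u), ∃! c : Fin (d + k) → ℤ, z = ∑ i, c i • B i) ∧
      ∀ i, intNorm (B i) ≤ Real.sqrt (d + 1) * T :=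
  statement7_general d k g u hgen T hT b hbmem hbasis hbnorm
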